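/- arXiv:1109.2483 — 2 statements merged into one kernel-verified Lean document; each statement's English description precedes it below -/
import Mathlib

section
/- For every integer k with 0 ≤ k ≤ n, one has θ_1^{n−k} ∧ θ_2^{n−k} ∧ λ^{2k} = (−1)^k (2k)! ((n−k)!)² · binom(n, k) · Ω in Λ^{4n}(U ⊗ W). (This computes the intersection numbers θ_1^{n−k} θ_2^{n−k} λ^{2k} on A × A for a very general principally polarized abelian variety A of dimension n.) -/
open scoped TensorProduct

set_option synthInstance.maxHeartbeats 1000000
set_option maxHeartbeats 1000000

noncomputable section

/-- `U n = ℝ^{2n}`, with basis `e_s = Pi.single (Sum.inl s) 1` (for `1 ≤ s ≤ n`) and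
`f_s = Pi.single (Sum.inr s) 1`. -/
abbrev U (n : ℕ) : Type := (Fin n ⊕ Fin n) → ℝ

/-- `W e = ℝ^e` with its standard basis `w_1, …, w_e`. -/
abbrev W (e : ℕ) : Type := Fin e → ℝ

/-- `V = U ⊗ W`. -/
abbrev V (n e : ℕ) : Type := U n ⊗[ℝ] W e

/-- The exterior algebra `Λ(U ⊗ W)`. -/
abbrev EA (n e : ℕ) : Type := ExteriorAlgebra ℝ (V n e)

/-- The standard symplectic form on `U = ℝ^{2n}`: `ω(e_s, f_t) = δ_{st}`,
`ω(e_s, e_t) = ω(f_s, f_t) = 0`. -/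
def omegaForm (n : ℕ) (x y : U n) : ℝ :=
  ∑ s : Fin n, (x (Sum.inl s) * y (Sum.inr s) - x (Sum.inr s) * y (Sum.inl s))

/-- The symplectic group `Sp(2n, ℝ)`: linear automorphisms of `U` preserving `ω`. -/
def Sp (n : ℕ) : Set (U n ≃ₗ[ℝ] U n) :=
  {g | ∀ x y : U n, omegaForm n (g x) (g y) = omegaForm n x y}

/-- The basis vector `e_s` of `U`. -/
def eU (n : ℕ) (s : Fin n) : U n := Pi.single (Sum.inl s) 1

/-- The basis vector `f_s` of `U`. -/
def fU (n : ℕ) (s : Fin n) : U n := Pi.single (Sum.inr s) 1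

/-- The basis vector `w_i` of `W`. -/
def wW (e : ℕ) (i : Fin e) : W e := Pi.single i 1

/-- The element `e_s ⊗ w_i`, viewed in the exterior algebra. -/
def EV (n e : ℕ) (s : Fin n) (i : Fin e) : EA n e :=
  ExteriorAlgebra.ι ℝ (eU n s ⊗ₜ[ℝ] wW e i)

/-- The element `f_s ⊗ w_i`, viewed in the exterior algebra. -/
def FV (n e : ℕ) (s : Fin n) (i : Fin e) : EA n e :=
  ExteriorAlgebra.ι ℝ (fU n s ⊗ₜ[ℝ] wW e i)

/-- `θ_i = Σ_s (e_s ⊗ w_i) ∧ (f_s ⊗ w_i)`. -/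
def theta (n e : ℕ) (i : Fin e) : EA n e := ∑ s : Fin n, EV n e s i * FV n e s i

/-- `λ_{jk} = Σ_s ((e_s ⊗ w_j) ∧ (f_s ⊗ w_k) + (e_s ⊗ w_k) ∧ (f_s ⊗ w_j))`. -/
def lam (n e : ℕ) (j k : Fin e) : EA n e :=
  ∑ s : Fin n, (EV n e s j * FV n e s k + EV n e s k * FV n e s j)

/-- The algebra automorphism of `Λ(U ⊗ W)` induced by `g ⊗ id_W`, for `g ∈ Sp(2n, ℝ)`. -/
def spAct (n e : ℕ) (g : U n ≃ₗ[ℝ] U n) : EA n e →ₐ[ℝ] EA n e :=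
  ExteriorAlgebra.map (TensorProduct.map g.toLinearMap LinearMap.id)

/-- The set `R` of elements of `Λ(U ⊗ W)` fixed by all `g ∈ Sp(2n, ℝ)`. -/
def Rset (n e : ℕ) : Set (EA n e) := {x | ∀ g ∈ Sp n, spAct n e g x = x}

/-- The submodule of `Sp(2n, ℝ)`-invariant elements of `Λ(U ⊗ W)`. -/
def fixedSubmodule (n e : ℕ) : Submodule ℝ (EA n e) :=
  ⨅ g ∈ Sp n, LinearMap.eqLocus (spAct n e g).toLinearMap (LinearMap.id)

/-- `R_d = R ∩ Λ^d(U ⊗ W)`, as a real vector space. -/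
def Rd (n e d : ℕ) : Submodule ℝ (EA n e) :=
  fixedSubmodule n e ⊓ ⋀[ℝ]^d (V n e)

/-- The algebra endomorphism of `Λ(U ⊗ W)` induced by `id_U ⊗ g`, where an `e × e` real
matrix `g` acts on `W` by sending `w_i` to `Σ_j g_{ji} w_j`. -/
def glAct (n e : ℕ) (g : Matrix (Fin e) (Fin e) ℝ) : EA n e →ₐ[ℝ] EA n e :=
  ExteriorAlgebra.map (TensorProduct.map LinearMap.id g.mulVecLin)

/-- The top form `Ω = (e_1⊗w_1) ∧ (f_1⊗w_1) ∧ ⋯ ∧ (e_n⊗w_1) ∧ (f_n⊗w_1) ∧ (e_1⊗w_2) ∧ ⋯ ∧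
(f_n⊗w_2)` in `Λ^{4n}(U ⊗ W)` (here `e = 2`). -/
def OmegaTop (n : ℕ) : EA n 2 :=
  (List.ofFn fun s : Fin n => EV n 2 s 0 * FV n 2 s 0).prod *
    (List.ofFn fun s : Fin n => EV n 2 s 1 * FV n 2 s 1).prod

/-! Write `θ_1 = ∑ₛ aₛ`, `θ_2 = ∑ₛ bₛ`, `λ = ∑ₛ cₛ` with `aₛ = (eₛ⊗w₁)(fₛ⊗w₁)`,
`bₛ = (eₛ⊗w₂)(fₛ⊗w₂)` and `cₛ = (eₛ⊗w₁)(fₛ⊗w₂) + (eₛ⊗w₂)(fₛ⊗w₁)`. Products of two vectors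
commute in the exterior algebra, and `aₛ² = bₛ² = aₛcₛ = bₛcₛ = 0`, `cₛ² = -2 aₛbₛ`.
So each index carries degree at most two, and a product of `p + q + r` of the sums over `m`
indices vanishes once `p + q + r > 2m`. Adding one index `s` to a product of total degree `2m`
therefore only keeps the `aₛbₛ`-part of the expansion, which gives the recursion
`z(M, k) = M² z(M - 1, k) - (2k)(2k - 1) z(M, k - 1)` for the coefficient of
`θ_1^M θ_2^M λ^{2k}`, solved by `(-1)^k (2k)! M!² binom(M + k, k)`. -/

open Finset

section Truncation

variable {R : Type*} [CommRing R]

theorem add_pow_eq_sum_range_of_pow_eq_zero {x y : R} {N : ℕ} (hy : y ^ N = 0) (p : ℕ) :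
    (y + x) ^ p = ∑ m ∈ range N, y ^ m * x ^ (p - m) * p.choose m := by
  have hvanish : ∀ m, p < m ∨ N ≤ m → y ^ m * x ^ (p - m) * p.choose m = 0 := by
    rintro m (hm | hm)
    · simp [Nat.choose_eq_zero_of_lt hm]
    · simp [pow_eq_zero_of_le hm hy]
  rw [add_pow, sum_subset (range_subset_range.2 (le_max_left (p + 1) N)),
    ← sum_subset (range_subset_range.2 (le_max_right (p + 1) N))] <;>
  · intro m _ hm
    exact hvanish m (by simp only [mem_range] at hm; omega)

theorem add_pow_of_pow_three_eq_zero {x y : R} (hy : y ^ 3 = 0) (p : ℕ) :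
    (y + x) ^ p = x ^ p + p * y * x ^ (p - 1) + p.choose 2 * y ^ 2 * x ^ (p - 2) := by
  rw [add_pow_eq_sum_range_of_pow_eq_zero hy]
  simp only [sum_range_succ, sum_range_zero, pow_zero, pow_one, tsub_zero, Nat.choose_zero_right,
    Nat.choose_one_right, Nat.cast_one, zero_add]
  ring

theorem add_pow_of_sq_eq_zero {x y : R} (hy : y ^ 2 = 0) (p : ℕ) :
    (y + x) ^ p = x ^ p + p * y * x ^ (p - 1) := by
  rw [add_pow_of_pow_three_eq_zero (by rw [pow_succ, hy, zero_mul]), hy]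
  ring

end Truncation

/-- The relations between the `s`-th summands `a`, `b`, `c` of `θ_1`, `θ_2`, `λ`. -/
structure ThetaLambdaRelations {R : Type*} [CommRing R] (a b c : R) : Prop where
  a_sq : a ^ 2 = 0
  b_sq : b ^ 2 = 0
  a_mul_c : a * c = 0
  b_mul_c : b * c = 0
  c_sq : c ^ 2 = -2 * a * b

namespace ThetaLambdaRelations

variable {R : Type*} [CommRing R] {a b c : R}

theorem c_pow_three (h : ThetaLambdaRelations a b c) : c ^ 3 = 0 := by
  linear_combination c * h.c_sq - 2 * b * h.a_mul_c

theorem add_pow_mul_add_pow_mul_add_pow (h : ThetaLambdaRelations a b c) (A B C : R)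
    (p q r : ℕ) :
    (a + A) ^ p * (b + B) ^ q * (c + C) ^ r =
      A ^ p * B ^ q * C ^ r + p * a * (A ^ (p - 1) * B ^ q * C ^ r)
        + q * b * (A ^ p * B ^ (q - 1) * C ^ r) + r * c * (A ^ p * B ^ q * C ^ (r - 1))
        + a * b * (p * q * (A ^ (p - 1) * B ^ (q - 1) * C ^ r)
          - 2 * r.choose 2 * (A ^ p * B ^ q * C ^ (r - 2))) := by
  rw [add_pow_of_sq_eq_zero h.a_sq, add_pow_of_sq_eq_zero h.b_sq,
    add_pow_of_pow_three_eq_zero h.c_pow_three]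
  set χ : R := ((r.choose 2 : ℕ) : R)
  linear_combination (χ * A ^ p * B ^ q * C ^ (r - 2)) * h.c_sq
    + (q * r * A ^ p * B ^ (q - 1) * C ^ (r - 1) + q * χ * A ^ p * B ^ (q - 1) * C ^ (r - 2) * c)
      * h.b_mul_c
    + (p * r * A ^ (p - 1) * B ^ q * C ^ (r - 1) + p * χ * A ^ (p - 1) * B ^ q * C ^ (r - 2) * c
      + p * q * r * b * A ^ (p - 1) * B ^ (q - 1) * C ^ (r - 1)
      + p * q * χ * b * c * A ^ (p - 1) * B ^ (q - 1) * C ^ (r - 2)) * h.a_mul_c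

end ThetaLambdaRelations

def thetaLambdaCoeff (M k : ℕ) : ℤ :=
  (-1) ^ k * (2 * k).factorial * M.factorial ^ 2 * (M + k).choose k

theorem Nat.two_mul_choose_two (k : ℕ) : (2 * k).choose 2 = k * (2 * k - 1) := by
  rw [Nat.choose_two_right, mul_assoc, Nat.mul_div_cancel_left _ two_pos]

theorem thetaLambdaCoeff_eq_sub (M k : ℕ) (h : M + k ≠ 0) :
    thetaLambdaCoeff M k = M ^ 2 * thetaLambdaCoeff (M - 1) k
      - 2 * (2 * k).choose 2 * thetaLambdaCoeff M (k - 1) := by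
  rw [Nat.two_mul_choose_two]
  rcases M with _ | M <;> rcases k with _ | k
  · contradiction
  · simp only [thetaLambdaCoeff, zero_add, Nat.choose_self, add_tsub_cancel_right,
      show 2 * (k + 1) = 2 * k + 1 + 1 by ring, Nat.factorial_succ]
    push_cast
    ring
  · simp only [thetaLambdaCoeff, add_zero, Nat.choose_zero_right, add_tsub_cancel_right,
      Nat.factorial_succ]
    push_cast
    ring
  · simp only [thetaLambdaCoeff, add_tsub_cancel_right, show M + 1 + (k + 1) = M + k + 1 + 1 by ring,
      Nat.choose_succ_succ, show M + (k + 1) = M + k + 1 by ring, show M + 1 + k = M + k + 1 by ring,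
      show 2 * (k + 1) = 2 * k + 1 + 1 by ring, Nat.factorial_succ]
    push_cast
    ring

namespace ThetaLambdaRelations

variable {R ι : Type*} [CommRing R] {a b c : ι → R}

theorem sum_pow_mul_sum_pow_mul_sum_pow_eq_zero (h : ∀ i, ThetaLambdaRelations (a i) (b i) (c i))
    (s : Finset ι) {p q r : ℕ} (hpqr : 2 * #s < p + q + r) :
    (∑ i ∈ s, a i) ^ p * (∑ i ∈ s, b i) ^ q * (∑ i ∈ s, c i) ^ r = 0 := by
  induction s using Finset.cons_induction generalizing p q r with
  | empty =>
    obtain hp | hq | hr : p ≠ 0 ∨ q ≠ 0 ∨ r ≠ 0 := by omega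
    all_goals simp [*]
  | cons j s hj ih =>
    rw [card_cons] at hpqr
    rw [sum_cons, sum_cons, sum_cons, (h j).add_pow_mul_add_pow_mul_add_pow, ih (by omega),
      ih (by omega), ih (by omega), ih (by omega), ih (by omega), ih (by omega)]
    ring

theorem sum_pow_mul_sum_pow_mul_sum_pow_eq (h : ∀ i, ThetaLambdaRelations (a i) (b i) (c i))
    (s : Finset ι) {M k : ℕ} (hMk : M + k = #s) :
    (∑ i ∈ s, a i) ^ M * (∑ i ∈ s, b i) ^ M * (∑ i ∈ s, c i) ^ (2 * k) =
      thetaLambdaCoeff M k * ∏ i ∈ s, (a i * b i) := by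
  induction s using Finset.cons_induction generalizing M k with
  | empty =>
    obtain ⟨rfl, rfl⟩ : M = 0 ∧ k = 0 := by rw [card_empty] at hMk; omega
    simp [thetaLambdaCoeff]
  | cons j s hj ih =>
    rw [card_cons] at hMk
    have hMpred : (M : R) * M * ((∑ i ∈ s, a i) ^ (M - 1) * (∑ i ∈ s, b i) ^ (M - 1) *
        (∑ i ∈ s, c i) ^ (2 * k)) = M ^ 2 * thetaLambdaCoeff (M - 1) k * ∏ i ∈ s, (a i * b i) := by
      rcases M with _ | M
      · simp
      · rw [ih (by omega)]; ring
    have hkpred : ((2 * k).choose 2 : R) * ((∑ i ∈ s, a i) ^ M * (∑ i ∈ s, b i) ^ M *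
        (∑ i ∈ s, c i) ^ (2 * k - 2)) =
          (2 * k).choose 2 * thetaLambdaCoeff M (k - 1) * ∏ i ∈ s, (a i * b i) := by
      rcases k with _ | k
      · simp
      · rw [show 2 * (k + 1) - 2 = 2 * k by omega, ih (by omega), Nat.add_sub_cancel]; ring
    have hcoeff := congrArg (Int.cast : ℤ → R) (thetaLambdaCoeff_eq_sub M k (by omega))
    push_cast at hcoeff
    rw [sum_cons, sum_cons, sum_cons, prod_cons, (h j).add_pow_mul_add_pow_mul_add_pow,
      sum_pow_mul_sum_pow_mul_sum_pow_eq_zero h s (by omega),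
      sum_pow_mul_sum_pow_mul_sum_pow_eq_zero h s (by omega),
      sum_pow_mul_sum_pow_mul_sum_pow_eq_zero h s (by omega),
      sum_pow_mul_sum_pow_mul_sum_pow_eq_zero h s (by omega)]
    linear_combination a j * b j * hMpred - 2 * a j * b j * hkpred
      - a j * b j * (∏ i ∈ s, (a i * b i)) * hcoeff

end ThetaLambdaRelations

section Bivectors

open ExteriorAlgebra

variable {R M : Type*} [CommRing R] [AddCommGroup M] [Module R M]

theorem ExteriorAlgebra.ι_mul_ι_comm (x y : M) : ι R x * ι R y = -(ι R y * ι R x) :=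
  eq_neg_of_add_eq_zero_left (ι_add_mul_swap x y)

theorem ExteriorAlgebra.commute_ι_mul_ι_ι (x y z : M) : Commute (ι R x * ι R y) (ι R z) := by
  rw [Commute, SemiconjBy, mul_assoc, ι_mul_ι_comm y z, mul_neg, ← mul_assoc, ι_mul_ι_comm x z,
    neg_mul, neg_neg, mul_assoc]

theorem ExteriorAlgebra.commute_ι_mul_ι (x y z w : M) :
    Commute (ι R x * ι R y) (ι R z * ι R w) :=
  (commute_ι_mul_ι_ι x y z).mul_right (commute_ι_mul_ι_ι x y w)

theorem ExteriorAlgebra.ι_mul_ι_mul_ι_mul_ι_self_left (x y z : M) :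
    ι R x * ι R y * (ι R x * ι R z) = 0 := by
  rw [← mul_assoc, (commute_ι_mul_ι_ι x y x).eq, ← mul_assoc, ι_sq_zero, zero_mul, zero_mul]

theorem ExteriorAlgebra.ι_mul_ι_mul_ι_mul_ι_self_right (x y z : M) :
    ι R x * ι R y * (ι R z * ι R y) = 0 := by
  rw [mul_assoc, ← (commute_ι_mul_ι_ι z y y).eq, mul_assoc, ι_sq_zero, mul_zero, mul_zero]

theorem ExteriorAlgebra.ι_mul_ι_mul_ι_mul_ι_swap (x y z w : M) :
    ι R x * ι R y * (ι R z * ι R w) = -(ι R x * ι R w * (ι R z * ι R y)) := by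
  rw [mul_assoc, mul_assoc, ι_mul_ι_comm z w, mul_neg, ← mul_assoc (ι R y), ι_mul_ι_comm y w,
    neg_mul, neg_neg, mul_assoc, ι_mul_ι_comm y z, mul_neg, mul_neg]

variable (R M) in
def bivectorSubalgebra : Subalgebra R (ExteriorAlgebra R M) :=
  Algebra.adjoin R {u | ∃ x y : M, ι R x * ι R y = u}

instance : IsMulCommutative (bivectorSubalgebra R M) :=
  Algebra.isMulCommutative_adjoin R <| by
    rintro _ ⟨x, y, rfl⟩ _ ⟨z, w, rfl⟩
    exact (commute_ι_mul_ι x y z w).eq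

variable (R) in
def bivector (x y : M) : bivectorSubalgebra R M :=
  ⟨ι R x * ι R y, Algebra.subset_adjoin ⟨x, y, rfl⟩⟩

@[simp]
theorem coe_bivector (x y : M) : (bivector R x y : ExteriorAlgebra R M) = ι R x * ι R y := rfl

open scoped IsMulCommutative in
theorem thetaLambdaRelations_bivector (x y x' y' : M) :
    ThetaLambdaRelations (bivector R x y) (bivector R x' y')
      (bivector R x y' + bivector R x' y) := by
  constructor
  case c_sq =>
    rw [show -2 * bivector R x y * bivector R x' y' =
      -(bivector R x y * bivector R x' y') - bivector R x y * bivector R x' y' by ring]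
    apply Subtype.ext
    simp only [pow_two, Subalgebra.coe_mul, Subalgebra.coe_add, Subalgebra.coe_sub,
      Subalgebra.coe_neg, coe_bivector, mul_add, add_mul, ι_mul_ι_mul_ι_mul_ι_self_left,
      zero_add, add_zero]
    rw [ι_mul_ι_mul_ι_mul_ι_swap x' y x y', ι_mul_ι_mul_ι_mul_ι_swap x y' x' y,
      (commute_ι_mul_ι (R := R) x' y' x y).eq, sub_eq_add_neg]
  all_goals
    apply Subtype.ext
    simp only [pow_two, Subalgebra.coe_mul, Subalgebra.coe_add, coe_bivector, mul_add,
      ι_mul_ι_mul_ι_mul_ι_self_left, ι_mul_ι_mul_ι_mul_ι_self_right, ZeroMemClass.coe_zero,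
      add_zero]

open scoped IsMulCommutative in
theorem Subalgebra.coe_prod_univ_fin {A : Type*} [Ring A] [Algebra R A] {S : Subalgebra R A}
    [IsMulCommutative S] {m : ℕ} (f : Fin m → S) :
    ((∏ i, f i : S) : A) = (List.ofFn fun i => (f i : A)).prod := by
  rw [← List.prod_ofFn, SubmonoidClass.coe_list_prod, List.map_ofFn]
  rfl

open scoped IsMulCommutative in
theorem ExteriorAlgebra.sum_pow_mul_sum_pow_mul_sum_pow {m : ℕ} (u v u' v' : Fin m → M)
    {p k : ℕ} (hpk : p + k = m) :
    (∑ i, ι R (u i) * ι R (v i)) ^ p * (∑ i, ι R (u' i) * ι R (v' i)) ^ p *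
        (∑ i, (ι R (u i) * ι R (v' i) + ι R (u' i) * ι R (v i))) ^ (2 * k) =
      thetaLambdaCoeff p k * ((List.ofFn fun i => ι R (u i) * ι R (v i)).prod *
        (List.ofFn fun i => ι R (u' i) * ι R (v' i)).prod) := by
  have key := ThetaLambdaRelations.sum_pow_mul_sum_pow_mul_sum_pow_eq
    (fun i => thetaLambdaRelations_bivector (R := R) (u i) (v i) (u' i) (v' i)) univ
    (by rw [card_univ, Fintype.card_fin, hpk])
  rw [prod_mul_distrib] at key
  have hcoe := congrArg Subtype.val key
  push_cast [Subalgebra.coe_prod_univ_fin] at hcoe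
  exact hcoe

end Bivectors

theorem statement9_general (n : ℕ) (k : ℕ) (hk : k ≤ n) :
    theta n 2 0 ^ (n - k) * theta n 2 1 ^ (n - k) * lam n 2 0 1 ^ (2 * k) =
      ((-1 : ℝ) ^ k * (2 * k).factorial * ((n - k).factorial : ℝ) ^ 2 * (n.choose k : ℝ)) •
        OmegaTop n := by
  have hsum := ExteriorAlgebra.sum_pow_mul_sum_pow_mul_sum_pow (R := ℝ)
    (fun s => eU n s ⊗ₜ[ℝ] wW 2 0) (fun s => fU n s ⊗ₜ[ℝ] wW 2 0)
    (fun s => eU n s ⊗ₜ[ℝ] wW 2 1) (fun s => fU n s ⊗ₜ[ℝ] wW 2 1) (Nat.sub_add_cancel hk)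
  rw [thetaLambdaCoeff, Nat.sub_add_cancel hk] at hsum
  rw [Algebra.smul_def]
  push_cast at hsum ⊢
  exact hsum

/-- For `0 ≤ k ≤ n`,
`θ_1^{n-k} ∧ θ_2^{n-k} ∧ λ^{2k} = (−1)^k (2k)! ((n−k)!)² binom(n,k) · Ω`. -/
theorem statement9 (n : ℕ) (hn : 1 ≤ n) (k : ℕ) (hk : k ≤ n) :
    theta n 2 0 ^ (n - k) * theta n 2 1 ^ (n - k) * lam n 2 0 1 ^ (2 * k) =
      ((-1 : ℝ) ^ k * (2 * k).factorial * ((n - k).factorial : ℝ) ^ 2 * (n.choose k : ℝ)) •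
        OmegaTop n :=
  statement9_general n k hk
end
end

section
/- Let 1 ≤ l ≤ e and 1 ≤ k ≤ n, and let ι : Λ(U ⊗ ℝ^l) → Λ(U ⊗ ℝ^e) be the injective ℝ-algebra homomorphism induced by the inclusion ℝ^l ↪ ℝ^e onto the first l coordinates. Then for every α ∈ Λ^{2k}(U ⊗ ℝ^l), one has ι(α) ∈ C_k^{(e)} if and only if α ∈ C_k^{(l)}. (This is the invariant-theoretic form of the statement that, for a projection p : A^e → A^l, a class α ∈ N^k(A^l) satisfies p^*α ∈ Sym^k Psef^1(A^e) if and only if α ∈ Sym^k Psef^1(A^l).) -/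
open scoped TensorProduct

set_option synthInstance.maxHeartbeats 1000000
set_option maxHeartbeats 1000000

noncomputable section

/-- `E_k = {g_1·θ_1 ∧ ⋯ ∧ g_k·θ_1 : g_1, …, g_k ∈ GL_e(ℝ)}` (the factors pairwise commute,
having even degree, so the ordered product below represents the wedge product). -/
def Ek (n e : ℕ) (he : 0 < e) (k : ℕ) : Set (EA n e) :=
  {x | ∃ g : Fin k → Matrix.GeneralLinearGroup (Fin e) ℝ,
    x = ((List.ofFn fun i : Fin k =>
      glAct n e (g i : Matrix (Fin e) (Fin e) ℝ) (theta n e ⟨0, he⟩)).prod)}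

/-- `C_k`: the convex cone generated by `E_k`, i.e. the set of finite nonnegative linear
combinations of elements of `E_k`. -/
def Ck (n e : ℕ) (he : 0 < e) (k : ℕ) : Set (EA n e) :=
  {x | ∃ (m : ℕ) (c : Fin m → ℝ) (y : Fin m → EA n e),
    (∀ i, 0 ≤ c i) ∧ (∀ i, y i ∈ Ek n e he k) ∧ x = ∑ i, c i • y i}

/-- A nonzero element `x` of a convex cone `C` spans an extreme ray of `C` if whenever
`x = y + z` with `y, z ∈ C`, both `y` and `z` are nonnegative multiples of `x`. -/
def SpansExtremeRay {X : Type*} [AddCommMonoid X] [Module ℝ X] (C : Set X) (x : X) : Prop :=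
  x ∈ C ∧ x ≠ 0 ∧ ∀ y ∈ C, ∀ z ∈ C, x = y + z →
    (∃ a : ℝ, 0 ≤ a ∧ y = a • x) ∧ (∃ b : ℝ, 0 ≤ b ∧ z = b • x)

/-- The inclusion `ℝ^l ↪ ℝ^e` onto the first `l` coordinates, as a linear map. -/
def inclW (l e : ℕ) : W l →ₗ[ℝ] W e :=
  Matrix.mulVecLin (Matrix.of fun (j : Fin e) (i : Fin l) =>
    if (j : ℕ) = (i : ℕ) then (1 : ℝ) else 0)

/-- The (injective) `ℝ`-algebra homomorphism `ι : Λ(U ⊗ ℝ^l) → Λ(U ⊗ ℝ^e)` induced by the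
inclusion `ℝ^l ↪ ℝ^e` onto the first `l` coordinates. -/
def inclEA (n l e : ℕ) : EA n l →ₐ[ℝ] EA n e :=
  ExteriorAlgebra.map (TensorProduct.map LinearMap.id (inclW l e))

/-! ### Auxiliary machinery -/

/-- `Θ(v) = Σ_s (e_s ⊗ v) ∧ (f_s ⊗ v)`. -/
def Theta (n m : ℕ) (v : W m) : EA n m :=
  ∑ s : Fin n, ExteriorAlgebra.ι ℝ (eU n s ⊗ₜ[ℝ] v) * ExteriorAlgebra.ι ℝ (fU n s ⊗ₜ[ℝ] v)

lemma theta_eq_Theta (n m : ℕ) (i : Fin m) : theta n m i = Theta n m (wW m i) := rfl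

lemma map_Theta (n m m' : ℕ) (f : W m →ₗ[ℝ] W m') (v : W m) :
    ExteriorAlgebra.map (TensorProduct.map (LinearMap.id) f) (Theta n m v)
      = Theta n m' (f v) := by
  unfold Theta
  rw [map_sum]
  refine Finset.sum_congr rfl fun s _ => ?_
  rw [map_mul, ExteriorAlgebra.map_apply_ι, ExteriorAlgebra.map_apply_ι,
    TensorProduct.map_tmul, TensorProduct.map_tmul, LinearMap.id_apply, LinearMap.id_apply]

lemma Theta_zero (n m : ℕ) : Theta n m 0 = 0 := by
  unfold Theta
  simp [TensorProduct.tmul_zero]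

lemma glAct_theta (n m : ℕ) (g : Matrix (Fin m) (Fin m) ℝ) (i : Fin m) :
    glAct n m g (theta n m i) = Theta n m (g.mulVec (wW m i)) := by
  rw [theta_eq_Theta, glAct, map_Theta]
  rfl

lemma wW_ne_zero (e : ℕ) (i : Fin e) : wW e i ≠ 0 := by
  intro h
  have := congrFun h i
  simp [wW] at this

lemma pi_sum_single (m : ℕ) (x : W m) : ∑ j, x j • (Pi.single j 1 : W m) = x := by
  have h : (fun j => x j • (Pi.single j 1 : W m)) = fun j => Pi.single j (x j) := by
    funext j
    rw [← Pi.single_smul, smul_eq_mul, mul_one]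
  rw [h]
  exact Finset.univ_sum_single x

/-- Every nonzero vector is the first column of some invertible matrix. -/
lemma exists_gl_mulVec (m : ℕ) (hm : 0 < m) (v : W m) (hv : v ≠ 0) :
    ∃ g : Matrix.GeneralLinearGroup (Fin m) ℝ,
      (g : Matrix (Fin m) (Fin m) ℝ).mulVec (wW m ⟨0, hm⟩) = v := by
  classical
  obtain ⟨i0, hi0⟩ : ∃ i, v i ≠ 0 := by
    by_contra h
    push_neg at h
    exact hv (funext h)
  set z : Fin m := ⟨0, hm⟩ with hz
  set M : Matrix (Fin m) (Fin m) ℝ := Matrix.of fun j i =>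
    if i = z then v j else if i = i0 then (if j = z then (1 : ℝ) else 0)
    else (if j = i then 1 else 0) with hM
  have hcol : ∀ i : Fin m, M.mulVec (Pi.single i 1) = fun j => M j i := by
    intro i
    funext j
    simp [Matrix.mulVec_single]
  have hcolmem : ∀ i : Fin m, (fun j => M j i) ∈ LinearMap.range M.mulVecLin := by
    intro i
    exact ⟨Pi.single i 1, by rw [Matrix.mulVecLin_apply, hcol]⟩
  have hcolz : (fun j => M j z) = v := by
    funext j
    simp [hM]
  have hv_mem : v ∈ LinearMap.range M.mulVecLin := by
    have := hcolmem z
    rwa [hcolz] at this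
  have hne : ∀ j : Fin m, j ≠ i0 → Pi.single j (1 : ℝ) ∈ LinearMap.range M.mulVecLin := by
    intro j hj
    by_cases hjz : j = z
    · subst hjz
      have := hcolmem i0
      convert this using 1
      funext j'
      simp [hM, Ne.symm hj, Pi.single_apply]
    · have := hcolmem j
      convert this using 1
      funext j'
      simp [hM, hjz, hj, Pi.single_apply]
  have hrange : ∀ j : Fin m, Pi.single j (1 : ℝ) ∈ LinearMap.range M.mulVecLin := by
    intro j
    by_cases hj : j = i0
    · subst hj
      have hadd := Finset.sum_erase_add Finset.univ
        (fun j' => v j' • (Pi.single j' 1 : W m)) (Finset.mem_univ j)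
      rw [pi_sum_single m v] at hadd
      have h1 : v j • (Pi.single j 1 : W m)
          = v - ∑ j' ∈ Finset.univ.erase j, v j' • (Pi.single j' 1 : W m) := by
        rw [eq_sub_iff_add_eq, add_comm]
        exact hadd
      have h2 : v j • (Pi.single j 1 : W m) ∈ LinearMap.range M.mulVecLin := by
        rw [h1]
        exact sub_mem hv_mem (Submodule.sum_mem _ fun j' hj' =>
          Submodule.smul_mem _ _ (hne j' (Finset.ne_of_mem_erase hj')))
      have h3 := Submodule.smul_mem _ (v j)⁻¹ h2
      rwa [smul_smul, inv_mul_cancel₀ hi0, one_smul] at h3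
    · exact hne j hj
  have hsurj : Function.Surjective M.mulVecLin := by
    rw [← LinearMap.range_eq_top, Submodule.eq_top_iff']
    intro x
    rw [← pi_sum_single m x]
    exact Submodule.sum_mem _ fun j _ => Submodule.smul_mem _ _ (hrange j)
  have hbij : Function.Bijective M.mulVecLin :=
    ⟨(LinearMap.injective_iff_surjective).mpr hsurj, hsurj⟩
  have hcoe : ⇑(Matrix.toLinAlgEquiv' M) = ⇑(M.mulVecLin) := by
    funext w
    rw [Matrix.toLinAlgEquiv'_apply, Matrix.mulVecLin_apply]
  have h1 : IsUnit (Matrix.toLinAlgEquiv' M) := by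
    rw [Module.End.isUnit_iff, hcoe]
    exact hbij
  have hunit : IsUnit M := by
    have h2 := h1.map (Matrix.toLinAlgEquiv' (n := Fin m) (R := ℝ)).symm
    simpa using h2
  refine ⟨hunit.unit, ?_⟩
  have hMat : ((hunit.unit : Matrix.GeneralLinearGroup (Fin m) ℝ) :
      Matrix (Fin m) (Fin m) ℝ) = M := hunit.unit_spec
  rw [hMat]
  have : wW m ⟨0, hm⟩ = Pi.single z (1 : ℝ) := rfl
  rw [this, hcol]
  funext j
  simp [hM]

lemma mem_Ek_iff (n e : ℕ) (he : 0 < e) (k : ℕ) (x : EA n e) :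
    x ∈ Ek n e he k ↔ ∃ v : Fin k → W e, (∀ i, v i ≠ 0) ∧
      x = (List.ofFn fun i => Theta n e (v i)).prod := by
  constructor
  · rintro ⟨g, rfl⟩
    refine ⟨fun i => ((g i : Matrix (Fin e) (Fin e) ℝ)).mulVec (wW e ⟨0, he⟩),
      fun i h0 => ?_, ?_⟩
    · apply wW_ne_zero e ⟨0, he⟩
      replace h0 : ((g i : Matrix (Fin e) (Fin e) ℝ)).mulVec (wW e ⟨0, he⟩) = 0 := h0
      have h1 : (((((g i)⁻¹ : Matrix.GeneralLinearGroup (Fin e) ℝ) :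
            Matrix (Fin e) (Fin e) ℝ)) * ((g i : Matrix (Fin e) (Fin e) ℝ))).mulVec
            (wW e ⟨0, he⟩) = 0 := by
        rw [← Matrix.mulVec_mulVec, h0, Matrix.mulVec_zero]
      rwa [Units.inv_mul, Matrix.one_mulVec] at h1
    · refine congrArg List.prod (congrArg List.ofFn (funext fun i => ?_))
      rw [glAct_theta]
  · rintro ⟨v, hv, rfl⟩
    choose g hg using fun i => exists_gl_mulVec e he (v i) (hv i)
    refine ⟨g, ?_⟩
    refine congrArg List.prod (congrArg List.ofFn (funext fun i => ?_))
    rw [glAct_theta, hg]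

lemma zero_mem_Ck (n e : ℕ) (he : 0 < e) (k : ℕ) : 0 ∈ Ck n e he k :=
  ⟨0, fun _ => 0, fun i => i.elim0, fun i => i.elim0, fun i => i.elim0, by simp⟩

lemma mem_Ck_of_mem_Ek {n e : ℕ} {he : 0 < e} {k : ℕ} {x : EA n e}
    (h : x ∈ Ek n e he k) : x ∈ Ck n e he k :=
  ⟨1, fun _ => 1, fun _ => x, fun _ => zero_le_one, fun _ => h, by simp⟩

lemma smul_mem_Ck {n e : ℕ} {he : 0 < e} {k : ℕ} {c : ℝ} (hc : 0 ≤ c) {x : EA n e}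
    (h : x ∈ Ck n e he k) : c • x ∈ Ck n e he k := by
  obtain ⟨m, cc, y, h1, h2, rfl⟩ := h
  refine ⟨m, fun i => c * cc i, y, fun i => mul_nonneg hc (h1 i), h2, ?_⟩
  rw [Finset.smul_sum]
  exact Finset.sum_congr rfl fun i _ => by simp [smul_smul]

lemma add_mem_Ck {n e : ℕ} {he : 0 < e} {k : ℕ} {x y : EA n e}
    (hx : x ∈ Ck n e he k) (hy : y ∈ Ck n e he k) : x + y ∈ Ck n e he k := by
  obtain ⟨m1, c1, y1, hc1, hy1, rfl⟩ := hx
  obtain ⟨m2, c2, y2, hc2, hy2, rfl⟩ := hy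
  refine ⟨m1 + m2, Fin.append c1 c2, Fin.append y1 y2, ?_, ?_, ?_⟩
  · intro i
    refine Fin.addCases (fun j => ?_) (fun j => ?_) i
    · simpa [Fin.append_left] using hc1 j
    · simpa [Fin.append_right] using hc2 j
  · intro i
    refine Fin.addCases (fun j => ?_) (fun j => ?_) i
    · simpa [Fin.append_left] using hy1 j
    · simpa [Fin.append_right] using hy2 j
  · rw [Fin.sum_univ_add]
    simp [Fin.append_left, Fin.append_right]

lemma sum_mem_Ck {n e : ℕ} {he : 0 < e} {k : ℕ} {m : ℕ} {c : Fin m → ℝ} {x : Fin m → EA n e}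
    (hc : ∀ i, 0 ≤ c i) (hx : ∀ i, x i ∈ Ck n e he k) :
    (∑ i, c i • x i) ∈ Ck n e he k := by
  classical
  refine Finset.sum_induction _ (· ∈ Ck n e he k)
    (fun a b ha hb => add_mem_Ck ha hb) (zero_mem_Ck n e he k) ?_
  intro i _
  exact smul_mem_Ck (hc i) (hx i)

/-- The projection `ℝ^e → ℝ^l` onto the first `l` coordinates. -/
def projW (l e : ℕ) (h : l ≤ e) : W e →ₗ[ℝ] W l where
  toFun v := fun i => v (Fin.castLE h i)
  map_add' _ _ := rfl
  map_smul' _ _ := rfl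

lemma projW_inclW (l e : ℕ) (h : l ≤ e) (v : W l) : projW l e h (inclW l e v) = v := by
  funext i
  show (Matrix.of fun (j : Fin e) (i : Fin l) =>
    if (j : ℕ) = (i : ℕ) then (1 : ℝ) else 0).mulVec v (Fin.castLE h i) = v i
  rw [Matrix.mulVec]
  simp only [Matrix.of_apply, dotProduct, Fin.coe_castLE]
  rw [Finset.sum_eq_single i]
  · simp
  · intro b _ hb
    rw [if_neg, zero_mul]
    intro hc
    exact hb (Fin.ext hc.symm)
  · intro hmem
    exact absurd (Finset.mem_univ i) hmem

/-- The algebra homomorphism `Λ(U ⊗ ℝ^e) → Λ(U ⊗ ℝ^l)` induced by the projection. -/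
def projEA (n l e : ℕ) (h : l ≤ e) : EA n e →ₐ[ℝ] EA n l :=
  ExteriorAlgebra.map (TensorProduct.map LinearMap.id (projW l e h))

lemma projEA_inclEA (n l e : ℕ) (h : l ≤ e) (x : EA n l) :
    projEA n l e h (inclEA n l e x) = x := by
  have hcomp : (projEA n l e h).comp (inclEA n l e) = AlgHom.id ℝ (EA n l) := by
    unfold projEA inclEA
    rw [ExteriorAlgebra.map_comp_map, ← TensorProduct.map_comp,
      show (projW l e h).comp (inclW l e) = LinearMap.id from
        LinearMap.ext (projW_inclW l e h),
      LinearMap.id_comp, TensorProduct.map_id, ExteriorAlgebra.map_id]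
  exact congrArg (fun f => f x) hcomp

/-- For `1 ≤ l ≤ e` and `1 ≤ k ≤ n`, a class `α ∈ Λ^{2k}(U ⊗ ℝ^l)`
satisfies `ι(α) ∈ C_k^{(e)}` if and only if `α ∈ C_k^{(l)}`. -/
theorem statement15 (n l e k : ℕ) (hn : 1 ≤ n) (hl : 1 ≤ l) (hle : l ≤ e)
    (hk1 : 1 ≤ k) (hkn : k ≤ n) (α : EA n l) (hα : α ∈ ⋀[ℝ]^(2 * k) (V n l)) :
    inclEA n l e α ∈ Ck n e (lt_of_lt_of_le hl hle) k ↔ α ∈ Ck n l hl k := by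
  classical
  constructor
  · intro h
    obtain ⟨m, c, y, hc, hy, hsum⟩ := h
    have hα2 : α = ∑ i, c i • projEA n l e hle (y i) := by
      have h1 := congrArg (projEA n l e hle) hsum
      rw [projEA_inclEA] at h1
      rw [h1, map_sum]
      exact Finset.sum_congr rfl fun i _ => by rw [map_smul]
    rw [hα2]
    refine sum_mem_Ck hc fun i => ?_
    obtain ⟨v, hv, hyi⟩ := (mem_Ek_iff n e (lt_of_lt_of_le hl hle) k (y i)).mp (hy i)
    have hproj : projEA n l e hle (y i)
        = (List.ofFn fun j => Theta n l (projW l e hle (v j))).prod := by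
      rw [hyi, map_list_prod, List.map_ofFn]
      refine congrArg List.prod (congrArg List.ofFn (funext fun j => ?_))
      exact map_Theta n e l (projW l e hle) (v j)
    by_cases h0 : ∀ j, projW l e hle (v j) ≠ 0
    · exact mem_Ck_of_mem_Ek ((mem_Ek_iff n l hl k _).mpr ⟨_, h0, hproj⟩)
    · push_neg at h0
      obtain ⟨j, hj⟩ := h0
      have hzero : projEA n l e hle (y i) = 0 := by
        rw [hproj]
        apply List.prod_eq_zero
        rw [List.mem_ofFn]
        refine ⟨j, ?_⟩
        show Theta n l (projW l e hle (v j)) = 0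
        rw [hj, Theta_zero]
      rw [hzero]
      exact zero_mem_Ck n l hl k
  · intro h
    obtain ⟨m, c, y, hc, hy, rfl⟩ := h
    rw [map_sum]
    rw [Finset.sum_congr rfl fun i _ => (map_smul (inclEA n l e) (c i) (y i) : _)]
    refine sum_mem_Ck hc fun i => ?_
    obtain ⟨v, hv, hyi⟩ := (mem_Ek_iff n l hl k (y i)).mp (hy i)
    refine mem_Ck_of_mem_Ek ((mem_Ek_iff n e (lt_of_lt_of_le hl hle) k _).mpr
      ⟨fun j => inclW l e (v j), fun j h0 => hv j ?_, ?_⟩)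
    · have h1 := congrArg (projW l e hle) h0
      rw [projW_inclW] at h1
      simpa using h1
    · rw [hyi, map_list_prod, List.map_ofFn]
      refine congrArg List.prod (congrArg List.ofFn (funext fun j => ?_))
      exact map_Theta n l e (inclW l e) (v j)
end
end
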